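/- arXiv:1607.04676 — 2 statements merged into one kernel-verified Lean document; each statement's English description precedes it below -/
import Mathlib

section
/- Let $n\ge1$. For a strictly upper triangular real $n\times n$ matrix $X$ (i.e. $X_{ij}=0$ for $i\ge j$), the matrix $A(X)=(I+X)^{\top}(I+X)$ is symmetric positive definite; let $\lambda_1(X),\dots,\lambda_n(X)>0$ denote its eigenvalues counted with multiplicity. Then, as $X\to0$, $\sum_{i=1}^{n}\big(\log\lambda_i(X)\big)^2\ =\ 2\,\|X\|_F^2\ +\ O\big(\|X\|_F^3\big)$. -/
/-!
Write `A = (I + X)ᵀ(I + X)` and `M = A - I = (X + Xᵀ) + XᵀX`. Diagonalising `A` orthogonally gives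
`∑ (λᵢ - 1)² = tr M² = ‖M‖_F²`. For strictly upper triangular `X` the entries `X i j` and `X j i`
never both survive, so `‖X + Xᵀ‖_F² = 2‖X‖_F²` exactly, while `‖XᵀX‖_F ≤ ‖X‖_F²`; hence
`‖M‖_F² = 2‖X‖_F² + O(‖X‖_F³)`. Finally `log λ = (λ - 1) + O((λ - 1)²)` near `1`, so replacing
`(λᵢ - 1)²` by `(log λᵢ)²` costs `O(‖M‖_F³) = O(‖X‖_F³)`.
-/

open Real Matrix
open scoped Matrix.Norms.Frobenius

theorem Real.abs_log_sub_sub_one_le {x : ℝ} (hx : 1 / 2 ≤ x) :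
    |log x - (x - 1)| ≤ 2 * (x - 1) ^ 2 := by
  have hx0 : 0 < x := by linarith
  have hlower : 1 - x⁻¹ ≤ log x := one_sub_inv_le_log_of_pos hx0
  have hupper : log x ≤ x - 1 := log_le_sub_one_of_pos hx0
  have hinv : x⁻¹ ≤ 2 := by rw [inv_le_comm₀ hx0 two_pos]; linarith
  have hgap : 1 - x⁻¹ - (x - 1) = -((x - 1) ^ 2 * x⁻¹) := by field_simp; ring
  rw [abs_le]
  constructor <;>
    nlinarith [sq_nonneg (x - 1), mul_le_mul_of_nonneg_left hinv (sq_nonneg (x - 1))]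

theorem Real.abs_log_sq_sub_sq_le {x : ℝ} (hx : |x - 1| ≤ 1 / 2) :
    |log x ^ 2 - (x - 1) ^ 2| ≤ 6 * |x - 1| ^ 3 := by
  have h₁ := abs_log_sub_sub_one_le (x := x) (by linarith [(abs_le.mp hx).1])
  have h₂ : |log x + (x - 1)| ≤ 3 * |x - 1| :=
    calc |log x + (x - 1)| = |(log x - (x - 1)) + 2 * (x - 1)| := by ring_nf
      _ ≤ 2 * (x - 1) ^ 2 + 2 * |x - 1| := by grw [abs_add_le, h₁, abs_mul, abs_two]
      _ ≤ 3 * |x - 1| := by nlinarith [sq_abs (x - 1), abs_nonneg (x - 1)]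
  calc |log x ^ 2 - (x - 1) ^ 2| = |log x - (x - 1)| * |log x + (x - 1)| := by
        rw [← abs_mul]; ring_nf
    _ ≤ 2 * (x - 1) ^ 2 * (3 * |x - 1|) := by gcongr
    _ = 6 * |x - 1| ^ 3 := by rw [← sq_abs]; ring

theorem Real.abs_sum_log_sq_sub_sum_sq_le {ι : Type*} [Fintype ι] (lam : ι → ℝ) {ρ : ℝ}
    (hρ0 : 0 ≤ ρ) (hρ : ρ ≤ 1 / 2) (hsum : ∑ i, (lam i - 1) ^ 2 ≤ ρ ^ 2) :
    |∑ i, log (lam i) ^ 2 - ∑ i, (lam i - 1) ^ 2| ≤ 6 * ρ ^ 3 := by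
  have hclose (i : ι) : |lam i - 1| ≤ ρ := abs_le_of_sq_le_sq
    ((Finset.single_le_sum (fun j _ => sq_nonneg (lam j - 1)) (Finset.mem_univ i)).trans hsum)
    hρ0
  have hterm (i : ι) : |log (lam i) ^ 2 - (lam i - 1) ^ 2| ≤ 6 * ρ * (lam i - 1) ^ 2 :=
    calc |log (lam i) ^ 2 - (lam i - 1) ^ 2| ≤ 6 * |lam i - 1| ^ 3 :=
          abs_log_sq_sub_sq_le ((hclose i).trans hρ)
      _ = 6 * |lam i - 1| * (lam i - 1) ^ 2 := by rw [← sq_abs (lam i - 1)]; ring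
      _ ≤ 6 * ρ * (lam i - 1) ^ 2 := by gcongr; exact hclose i
  calc |∑ i, log (lam i) ^ 2 - ∑ i, (lam i - 1) ^ 2|
      ≤ ∑ i, |log (lam i) ^ 2 - (lam i - 1) ^ 2| := by
        rw [← Finset.sum_sub_distrib]; exact Finset.abs_sum_le_sum_abs _ _
    _ ≤ 6 * ρ * ∑ i, (lam i - 1) ^ 2 := by rw [Finset.mul_sum]; gcongr with i; exact hterm i
    _ ≤ 6 * ρ * ρ ^ 2 := by gcongr
    _ = 6 * ρ ^ 3 := by ring

theorem abs_norm_add_sq_sub_norm_sq_le {E : Type*} [SeminormedAddCommGroup E] (a b : E) :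
    |‖a + b‖ ^ 2 - ‖a‖ ^ 2| ≤ ‖b‖ * (2 * ‖a‖ + ‖b‖) := by
  have h₁ : |‖a + b‖ - ‖a‖| ≤ ‖b‖ := by simpa using abs_norm_sub_norm_le (a + b) a
  have h₂ : |‖a + b‖ + ‖a‖| ≤ 2 * ‖a‖ + ‖b‖ := by
    rw [abs_of_nonneg (by positivity)]; linarith [norm_add_le a b]
  calc |‖a + b‖ ^ 2 - ‖a‖ ^ 2| = |‖a + b‖ - ‖a‖| * |‖a + b‖ + ‖a‖| := by
        rw [← abs_mul]; ring_nf
    _ ≤ ‖b‖ * (2 * ‖a‖ + ‖b‖) := by gcongr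

namespace Matrix

variable {n : Type*} [Fintype n]

theorem frobenius_norm_eq_sqrt {m : Type*} [Fintype m] (A : Matrix m n ℝ) :
    ‖A‖ = √(∑ i, ∑ j, A i j ^ 2) := by
  simp [frobenius_norm_def, Real.sqrt_eq_rpow]

theorem frobenius_norm_sq {m : Type*} [Fintype m] (A : Matrix m n ℝ) :
    ‖A‖ ^ 2 = ∑ i, ∑ j, A i j ^ 2 := by
  rw [frobenius_norm_eq_sqrt, sq_sqrt (by positivity)]

theorem frobenius_norm_add_transpose_sq {X : Matrix n n ℝ} (hX : ∀ i j, X i j * X j i = 0) :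
    ‖X + Xᵀ‖ ^ 2 = 2 * ‖X‖ ^ 2 := by
  have hentry (i j : n) : (X + Xᵀ) i j ^ 2 = X i j ^ 2 + X j i ^ 2 := by
    simp only [add_apply, transpose_apply]; linear_combination 2 * hX i j
  simp only [frobenius_norm_sq, hentry, Finset.sum_add_distrib]
  rw [Finset.sum_comm (f := fun i j => X j i ^ 2)]; ring

variable [DecidableEq n]

theorem det_one_add_of_strictlyUpper [LinearOrder n] {R : Type*} [CommRing R]
    {X : Matrix n n R} (hX : ∀ i j, j ≤ i → X i j = 0) : (1 + X).det = 1 := by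
  rw [det_of_isUpperTriangular (blockTriangular_one.add fun i j h => hX i j h.le)]
  simp [hX _ _ le_rfl]

theorem posDef_transpose_mul_self_one_add_of_strictlyUpper [LinearOrder n] {X : Matrix n n ℝ}
    (hX : ∀ i j, j ≤ i → X i j = 0) : ((1 + X)ᵀ * (1 + X)).PosDef := by
  have hunit : IsUnit (1 + X) := by
    rw [isUnit_iff_isUnit_det, det_one_add_of_strictlyUpper hX]; exact isUnit_one
  simpa [conjTranspose_eq_transpose_of_trivial] using
    PosDef.conjTranspose_mul_self (1 + X) (mulVec_injective_iff_isUnit.mpr hunit)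

theorem IsHermitian.trace_sub_one_mul_sub_one {𝕜 : Type*} [RCLike 𝕜] {A : Matrix n n 𝕜}
    (hA : A.IsHermitian) :
    ((A - 1) * (A - 1)).trace = ∑ i, ((hA.eigenvalues i : 𝕜) - 1) ^ 2 := by
  conv_lhs =>
    rw [hA.spectral_theorem, ← map_one (Unitary.conjStarAlgAut 𝕜 _ hA.eigenvectorUnitary),
      ← map_sub, ← map_mul, Unitary.conjStarAlgAut_apply, trace_mul_cycle,
      Unitary.coe_star_mul_self, one_mul]
  rw [← diagonal_one, diagonal_sub, diagonal_mul_diagonal, trace_diagonal]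
  simp [sq]

theorem transpose_mul_self_one_add_sub_one (X : Matrix n n ℝ) :
    (1 + X)ᵀ * (1 + X) - 1 = (X + Xᵀ) + Xᵀ * X := by
  rw [transpose_add, transpose_one]; noncomm_ring

theorem IsHermitian.sum_eigenvalues_sub_one_sq {A : Matrix n n ℝ} (hA : A.IsHermitian) :
    ∑ i, (hA.eigenvalues i - 1) ^ 2 = ‖A - 1‖ ^ 2 := by
  have hsymm : (A - 1)ᵀ = A - 1 := by
    rw [transpose_sub, transpose_one, ← conjTranspose_eq_transpose_of_trivial, hA.eq]
  have htrace := hA.trace_sub_one_mul_sub_one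
  simp only [RCLike.ofReal_real_eq_id, id] at htrace
  rw [← htrace, frobenius_norm_sq, trace]
  refine Finset.sum_congr rfl fun i _ => ?_
  rw [diag_apply, mul_apply]
  refine Finset.sum_congr rfl fun j _ => ?_
  rw [sq]; congr 1; exact congrFun (congrFun hsymm i) j

theorem norm_transpose_mul_self_one_add_sub_one_le (X : Matrix n n ℝ) :
    ‖(1 + X)ᵀ * (1 + X) - 1‖ ≤ 2 * ‖X‖ + ‖X‖ ^ 2 := by
  rw [transpose_mul_self_one_add_sub_one]
  calc ‖(X + Xᵀ) + Xᵀ * X‖ ≤ (‖X‖ + ‖Xᵀ‖) + ‖Xᵀ‖ * ‖X‖ :=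
        (norm_add_le _ _).trans (add_le_add (norm_add_le _ _) (frobenius_norm_mul _ _))
    _ = 2 * ‖X‖ + ‖X‖ ^ 2 := by rw [frobenius_norm_transpose]; ring

theorem abs_norm_transpose_mul_self_one_add_sub_one_sq_sub_le {X : Matrix n n ℝ}
    (hX : ∀ i j, X i j * X j i = 0) :
    |‖(1 + X)ᵀ * (1 + X) - 1‖ ^ 2 - 2 * ‖X‖ ^ 2| ≤ ‖X‖ ^ 2 * (4 * ‖X‖ + ‖X‖ ^ 2) := by
  rw [transpose_mul_self_one_add_sub_one, ← frobenius_norm_add_transpose_sq hX]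
  have hsymm : ‖X + Xᵀ‖ ≤ 2 * ‖X‖ := by
    grw [norm_add_le, frobenius_norm_transpose]; rw [two_mul]
  have hprod : ‖Xᵀ * X‖ ≤ ‖X‖ ^ 2 := by
    grw [frobenius_norm_mul, frobenius_norm_transpose]; rw [sq]
  calc |‖X + Xᵀ + Xᵀ * X‖ ^ 2 - ‖X + Xᵀ‖ ^ 2|
      ≤ ‖Xᵀ * X‖ * (2 * ‖X + Xᵀ‖ + ‖Xᵀ * X‖) := abs_norm_add_sq_sub_norm_sq_le _ _
    _ ≤ ‖X‖ ^ 2 * (2 * (2 * ‖X‖) + ‖X‖ ^ 2) := by gcongr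
    _ = ‖X‖ ^ 2 * (4 * ‖X‖ + ‖X‖ ^ 2) := by ring

end Matrix

theorem stmt3_general (n : ℕ) :
    ∃ C r : ℝ, 0 < C ∧ 0 < r ∧
      ∀ X : Matrix (Fin n) (Fin n) ℝ,
        (∀ i j : Fin n, (j : ℕ) ≤ (i : ℕ) → X i j = 0) →
        Real.sqrt (∑ i, ∑ j, X i j ^ 2) ≤ r →
        ∃ hA : ((1 + X)ᵀ * (1 + X)).IsHermitian,
          ((1 + X)ᵀ * (1 + X)).PosDef ∧
          |(∑ i, Real.log (hA.eigenvalues i) ^ 2) - 2 * ∑ i, ∑ j, X i j ^ 2|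
            ≤ C * Real.sqrt (∑ i, ∑ j, X i j ^ 2) ^ 3 := by
  refine ⟨167, 1 / 6, by norm_num, by norm_num, fun X hX hr => ?_⟩
  have hPD := posDef_transpose_mul_self_one_add_of_strictlyUpper (X := X) hX
  refine ⟨hPD.isHermitian, hPD, ?_⟩
  rw [← frobenius_norm_eq_sqrt] at hr ⊢
  rw [← frobenius_norm_sq]
  have hXX (i j : Fin n) : X i j * X j i = 0 := by
    rcases le_total j i with h | h
    · rw [hX i j h, zero_mul]
    · rw [hX j i h, mul_zero]
  have hS := hPD.isHermitian.sum_eigenvalues_sub_one_sq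
  have hlog := abs_sum_log_sq_sub_sum_sq_le hPD.isHermitian.eigenvalues (ρ := 3 * ‖X‖)
    (by positivity) (by linarith) (by
      rw [hS]; gcongr
      nlinarith [norm_transpose_mul_self_one_add_sub_one_le X, norm_nonneg X])
  rw [hS] at hlog
  have hquad := abs_norm_transpose_mul_self_one_add_sub_one_sq_sub_le hXX
  calc _ ≤ 6 * (3 * ‖X‖) ^ 3 + ‖X‖ ^ 2 * (4 * ‖X‖ + ‖X‖ ^ 2) :=
        (abs_sub_le _ _ _).trans (add_le_add hlog hquad)
    _ ≤ 167 * ‖X‖ ^ 3 := by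
        nlinarith [mul_le_mul_of_nonneg_left hr (pow_nonneg (norm_nonneg X) 3)]

/-- For strictly upper triangular `X`, the eigenvalues `λᵢ` of `(I+X)ᵀ(I+X)` satisfy
`∑ (log λᵢ)² = 2‖X‖_F² + O(‖X‖_F³)` as `X → 0`. -/
theorem stmt3 (n : ℕ) (hn : 1 ≤ n) :
    ∃ C r : ℝ, 0 < C ∧ 0 < r ∧
      ∀ X : Matrix (Fin n) (Fin n) ℝ,
        (∀ i j : Fin n, (j : ℕ) ≤ (i : ℕ) → X i j = 0) →
        Real.sqrt (∑ i, ∑ j, X i j ^ 2) ≤ r →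
        ∃ hA : ((1 + X)ᵀ * (1 + X)).IsHermitian,
          ((1 + X)ᵀ * (1 + X)).PosDef ∧
          |(∑ i, Real.log (hA.eigenvalues i) ^ 2) - 2 * ∑ i, ∑ j, X i j ^ 2|
            ≤ C * Real.sqrt (∑ i, ∑ j, X i j ^ 2) ^ 3 :=
  stmt3_general n
end

section
/- For $x_1,x_2\in\mathbb{R}$ let $N=\begin{pmatrix}1&x_1&x_2\\0&1&0\\0&0&1\end{pmatrix}$ and $s=x_1^2+x_2^2$. Then: (a) the characteristic polynomial of $N^{\top}N$ is $(X-1)\big(X^2-(2+s)X+1\big)$; (b) if $\lambda_1,\lambda_2,\lambda_3>0$ denote the eigenvalues of the symmetric positive definite matrix $N^{\top}N$ counted with multiplicity, then $\sum_{i=1}^{3}\big(\log\lambda_i\big)^2\ =\ 2\Big(\log\Big(1+\frac{s}{2}+\sqrt{s+\frac{s^2}{4}}\Big)\Big)^2$. -/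
/-!
`NᵀN` is positive definite because `det N = 1`. Its characteristic polynomial factors as
`(X - 1)(X - λ)(X - λ⁻¹)` with `λ = 1 + s/2 + √(s + s²/4)`, the larger root of
`X² - (2 + s)X + 1`; hence the logarithms of its eigenvalues are `0` and `±log λ`.
-/

open Real Matrix Polynomial

lemma Matrix.IsHermitian.sum_eigenvalues_eq_sum_roots_charpoly {n : Type*} [Fintype n]
    [DecidableEq n] {A : Matrix n n ℝ} (hA : A.IsHermitian) (f : ℝ → ℝ) :
    ∑ i, f (hA.eigenvalues i) = (A.charpoly.roots.map f).sum := by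
  rw [hA.roots_charpoly_eq_eigenvalues, Multiset.map_map]
  rfl

lemma Matrix.IsHermitian.sum_sq_log_eigenvalues_of_charpoly {n : Type*} [Fintype n]
    [DecidableEq n] {A : Matrix n n ℝ} (hA : A.IsHermitian) {a : ℝ}
    (h : A.charpoly = (X - 1) * ((X - C a) * (X - C a⁻¹))) :
    ∑ i, log (hA.eigenvalues i) ^ 2 = 2 * log a ^ 2 := by
  have hroots : A.charpoly.roots = {1, a, a⁻¹} := by
    have hne : ∀ t : ℝ, X - C t ≠ 0 := X_sub_C_ne_zero
    rw [h, ← C_1, roots_mul (mul_ne_zero (hne 1) (mul_ne_zero (hne a) (hne a⁻¹))),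
      roots_mul (mul_ne_zero (hne a) (hne a⁻¹)), roots_X_sub_C, roots_X_sub_C, roots_X_sub_C]
    rfl
  rw [hA.sum_eigenvalues_eq_sum_roots_charpoly fun t => log t ^ 2, hroots]
  simp only [Multiset.insert_eq_cons, Multiset.map_cons, Multiset.sum_cons, Multiset.map_singleton,
    Multiset.sum_singleton, log_one, log_inv]
  ring

lemma Polynomial.X_sq_sub_C_add_inv_mul_X_add_one {K : Type*} [Field K] {a : K} (ha : a ≠ 0) :
    X ^ 2 - C (a + a⁻¹) * X + 1 = (X - C a) * (X - C a⁻¹) := by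
  have : C a * C a⁻¹ = (1 : K[X]) := by rw [← C_mul, mul_inv_cancel₀ ha, C_1]
  rw [C_add]
  linear_combination -this

lemma add_inv_one_add_half_add_sqrt {s : ℝ} (hs : 0 ≤ s) :
    (1 + s / 2 + √(s + s ^ 2 / 4)) + (1 + s / 2 + √(s + s ^ 2 / 4))⁻¹ = 2 + s := by
  have hsq : √(s + s ^ 2 / 4) ^ 2 = s + s ^ 2 / 4 := sq_sqrt (by positivity)
  have hinv : (1 + s / 2 + √(s + s ^ 2 / 4))⁻¹ = 1 + s / 2 - √(s + s ^ 2 / 4) :=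
    inv_eq_of_mul_eq_one_right (by linear_combination -hsq)
  rw [hinv]
  ring

lemma Matrix.posDef_transpose_mul_self {n : Type*} [Fintype n] [DecidableEq n]
    {N : Matrix n n ℝ} (hN : IsUnit N.det) : (Nᵀ * N).PosDef := by
  rw [← conjTranspose_eq_transpose_of_trivial]
  exact .conjTranspose_mul_self N <|
    mulVec_injective_iff_isUnit.mpr ((isUnit_iff_isUnit_det N).mpr hN)

lemma transpose_mul_self_unitriangular (x₁ x₂ : ℝ) :
    (!![1, x₁, x₂; 0, 1, 0; 0, 0, 1] : Matrix (Fin 3) (Fin 3) ℝ)ᵀ *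
      !![1, x₁, x₂; 0, 1, 0; 0, 0, 1] =
      !![1, x₁, x₂; x₁, 1 + x₁ ^ 2, x₁ * x₂; x₂, x₁ * x₂, 1 + x₂ ^ 2] := by
  ext i j; fin_cases i <;> fin_cases j <;> simp [mul_apply, Fin.sum_univ_three] <;> ring

lemma charpoly_transpose_mul_self_unitriangular (x₁ x₂ : ℝ) :
    ((!![1, x₁, x₂; 0, 1, 0; 0, 0, 1] : Matrix (Fin 3) (Fin 3) ℝ)ᵀ *
      !![1, x₁, x₂; 0, 1, 0; 0, 0, 1]).charpoly =
      (X - 1) * (X ^ 2 - C (2 + (x₁ ^ 2 + x₂ ^ 2)) * X + 1) := by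
  rw [transpose_mul_self_unitriangular, charpoly, det_fin_three]
  simp only [charmatrix_apply, diagonal_apply, of_apply, cons_val', cons_val_zero, cons_val_one,
    cons_val_two, head_cons, tail_cons, empty_val', cons_val_fin_one, head_fin_const]
  simp only [Fin.isValue, ↓reduceIte, Fin.reduceEq, C_add, C_mul, C_pow, C_1, C_ofNat]
  ring

/-- For `N = [[1,x₁,x₂],[0,1,0],[0,0,1]]` and `s = x₁² + x₂²`:
(a) the characteristic polynomial of `NᵀN` is `(X-1)(X²-(2+s)X+1)`;
(b) the eigenvalues `λᵢ` of the symmetric positive definite matrix `NᵀN` satisfy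
`∑ (log λᵢ)² = 2 (log(1 + s/2 + √(s + s²/4)))²`. -/
theorem stmt5 (x₁ x₂ s : ℝ) (N : Matrix (Fin 3) (Fin 3) ℝ)
    (hN : N = !![1, x₁, x₂; 0, 1, 0; 0, 0, 1])
    (hs : s = x₁ ^ 2 + x₂ ^ 2) :
    (Nᵀ * N).charpoly =
      (Polynomial.X - 1) * (Polynomial.X ^ 2 - Polynomial.C (2 + s) * Polynomial.X + 1) ∧
    ∃ hA : (Nᵀ * N).IsHermitian,
      (Nᵀ * N).PosDef ∧
      (∑ i, Real.log (hA.eigenvalues i) ^ 2)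
        = 2 * Real.log (1 + s / 2 + Real.sqrt (s + s ^ 2 / 4)) ^ 2 := by
  have hcharpoly := charpoly_transpose_mul_self_unitriangular x₁ x₂
  rw [← hN, ← hs] at hcharpoly
  have hPD : (Nᵀ * N).PosDef := posDef_transpose_mul_self (by simp [hN, det_fin_three])
  refine ⟨hcharpoly, hPD.isHermitian, hPD, hPD.isHermitian.sum_sq_log_eigenvalues_of_charpoly ?_⟩
  have hs₀ : 0 ≤ s := by rw [hs]; positivity
  have hpos : 0 < 1 + s / 2 + √(s + s ^ 2 / 4) := by positivity
  rw [hcharpoly, ← X_sq_sub_C_add_inv_mul_X_add_one hpos.ne', add_inv_one_add_half_add_sqrt hs₀]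
end
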